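/- Let N ≥ 1 be an integer, p a real parameter, and d an integer with 0 ≤ d ≤ N. Then the type-3 exceptional Krawtchouk polynomial of index N−d satisfies, as an identity of real polynomials, K̂_{N−d}^{(3,d)}(x;p,N) = (x−N+1)_N, i.e., p·K_d(x;1−p,N)·K_{N−d}(x+1;p,N) − (p−1)·K_d(x+1;1−p,N)·K_{N−d}(x;p,N) = (x−N+1)(x−N+2)⋯x. -/

import Mathlib

open Polynomial

/-- Pochhammer symbol `(c)_k = c (c+1) ⋯ (c+k−1)`. -/
noncomputable def poch (c : ℝ) (k : ℕ) : ℝ := ∏ i ∈ Finset.range k, (c + i)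

/-- The monic Krawtchouk polynomial
`K_n(x;p,a) = Σ_{j=0}^{n} ((−n)_j (−a+j)_{n−j} / j!) p^{n−j} (−x)_j`,
where `(−x)_j = Π_{i=0}^{j−1} (i − x)` as a polynomial in `x`. -/
noncomputable def kraw (n : ℕ) (p a : ℝ) : Polynomial ℝ :=
  ∑ j ∈ Finset.range (n + 1),
    Polynomial.C (poch (-(n : ℝ)) j * poch (-a + j) (n - j) / (Nat.factorial j) * p ^ (n - j)) *
      ∏ i ∈ Finset.range j, (Polynomial.C (i : ℝ) - Polynomial.X)

/-- The type-3 exceptional Krawtchouk polynomial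
`K̂_n^{(3,d)}(x;p,N) = p K_d(x;1−p,N) K_n(x+1;p,N) − (p−1) K_d(x+1;1−p,N) K_n(x;p,N)`. -/
noncomputable def xkraw3 (d n : ℕ) (p N : ℝ) : Polynomial ℝ :=
  Polynomial.C p * kraw d (1 - p) N * (kraw n p N).comp (Polynomial.X + 1) -
    Polynomial.C (p - 1) * (kraw d (1 - p) N).comp (Polynomial.X + 1) * kraw n p N

noncomputable def phi (j : ℕ) : Polynomial ℝ := ∏ i ∈ Finset.range j, (C (i:ℝ) - X)

noncomputable def kc (n : ℕ) (p N : ℝ) (j : ℕ) : ℝ :=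
  poch (-(n:ℝ)) j * poch (-N + j) (n - j) / (Nat.factorial j) * p ^ (n - j)

lemma kraw_eq (n : ℕ) (p N : ℝ) :
    kraw n p N = ∑ j ∈ Finset.range (n+1), C (kc n p N j) * phi j := rfl

lemma phi_zero : phi 0 = 1 := Finset.prod_range_zero _

lemma phi_succ (j : ℕ) : phi (j+1) = phi j * (C (j:ℝ) - X) := Finset.prod_range_succ _ _

lemma phi_comp_add : ∀ j, (phi (j+1)).comp (X+1) = (C (-1:ℝ) - X) * phi j := by
  intro j
  induction j with
  | zero =>
      simp only [phi_succ, phi_zero, sub_comp, C_comp, X_comp, one_mul, mul_one]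
      simp only [map_neg, map_one, Nat.cast_zero, map_zero]
      ring
  | succ j ih =>
      rw [phi_succ (j+1), mul_comp, ih, sub_comp, C_comp, X_comp, phi_succ j]
      push_cast
      simp only [map_neg, map_one, map_add]
      ring

lemma phi_comp_sub : ∀ j, X * ((phi j).comp (X-1)) = -(phi (j+1)) := by
  intro j
  induction j with
  | zero =>
      simp only [phi_succ, phi_zero, one_comp, mul_one, one_mul]
      simp only [Nat.cast_zero, map_zero]
      ring
  | succ j ih =>
      rw [phi_succ j, mul_comp, sub_comp, C_comp, X_comp, phi_succ (j+1), phi_succ j,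
        show X * ((phi j).comp (X - 1) * (C (j:ℝ) - (X - 1))) =
          (X * (phi j).comp (X-1)) * (C (j:ℝ) - (X - 1)) by ring, ih]
      rw [phi_succ j]
      push_cast
      simp only [map_neg, map_one, map_add]
      ring

lemma poch_succ (c : ℝ) (k : ℕ) : poch c (k+1) = poch c k * (c + k) :=
  Finset.prod_range_succ _ _

lemma poch_succ' (c : ℝ) (k : ℕ) : poch c (k+1) = c * poch (c+1) k := by
  unfold poch
  rw [Finset.prod_range_succ']
  rw [show (c + (0:ℕ)) = c by push_cast; ring, mul_comm]
  congr 1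
  refine Finset.prod_congr rfl fun i _ => ?_
  push_cast; ring

lemma kc_rec (n : ℕ) (p N : ℝ) (j : ℕ) (hj : j < n) :
    kc n p N j * ((n:ℝ) - j) = kc n p N (j+1) * (p * ((j:ℝ)+1) * (N - j)) := by
  have h1 : n - j = (n - (j+1)) + 1 := by omega
  unfold kc
  rw [h1, poch_succ' (-N + j), poch_succ (-(n:ℝ)) j, pow_succ, Nat.factorial_succ]
  have hf : ((Nat.factorial j : ℝ)) ≠ 0 := Nat.cast_ne_zero.2 (Nat.factorial_ne_zero j)
  have hj1 : ((j:ℝ) + 1) ≠ 0 := by positivity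
  push_cast
  field_simp
  ring

lemma bracket_succ (p N : ℝ) (j : ℕ) :
    C p * (C N - X) * ((phi (j+1)).comp (X+1)) + X * C (1-p) * ((phi (j+1)).comp (X-1))
      - (C p * (C N - X) + X * C (1-p)) * phi (j+1)
    = - C ((j:ℝ)+1) * phi (j+1) - C (p * ((j:ℝ)+1) * (N - (j:ℝ))) * phi j := by
  rw [phi_comp_add]
  rw [show X * C (1-p) * ((phi (j+1)).comp (X-1)) = C (1-p) * (X * ((phi (j+1)).comp (X-1))) by
    ring, phi_comp_sub, phi_succ (j+1), phi_succ j]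
  push_cast
  simp only [map_neg, map_one, map_add, map_sub, map_mul]
  ring

lemma kraw_de (n : ℕ) (p N : ℝ) :
    C p * (C N - X) * (kraw n p N).comp (X+1) + X * C (1-p) * (kraw n p N).comp (X-1)
      = (C p * (C N - X) + X * C (1-p) - C (n:ℝ)) * kraw n p N := by
  have hf : ∀ j, ((Nat.factorial j : ℝ)) ≠ 0 := fun j => Nat.cast_ne_zero.2 (Nat.factorial_ne_zero j)
  set u : ℕ → Polynomial ℝ := fun j => C (kc n p N j * ((n:ℝ) - j)) * phi j with hu
  set v : ℕ → Polynomial ℝ := fun j => C (kc n p N (j+1) * (p * ((j:ℝ)+1) * (N - j))) * phi j with hv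
  set t : ℕ → Polynomial ℝ := fun j =>
    C p * (C N - X) * (C (kc n p N j) * (phi j).comp (X+1))
      + X * C (1-p) * (C (kc n p N j) * (phi j).comp (X-1))
      - (C p * (C N - X) + X * C (1-p) - C (n:ℝ)) * (C (kc n p N j) * phi j) with ht
  have h0 : t 0 = u 0 := by
    simp only [ht, hu, phi_zero, one_comp, Nat.cast_zero, sub_zero, map_mul]
    ring
  have hs : ∀ j, t (j+1) = u (j+1) - v j := by
    intro j
    have hb := bracket_succ p N j
    simp only [ht, hu, hv]
    have : C p * (C N - X) * (C (kc n p N (j+1)) * (phi (j+1)).comp (X+1))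
        + X * C (1-p) * (C (kc n p N (j+1)) * (phi (j+1)).comp (X-1))
        - (C p * (C N - X) + X * C (1-p) - C ((n:ℝ))) * (C (kc n p N (j+1)) * phi (j+1))
        = C (kc n p N (j+1)) *
          ((C p * (C N - X) * ((phi (j+1)).comp (X+1)) + X * C (1-p) * ((phi (j+1)).comp (X-1))
            - (C p * (C N - X) + X * C (1-p)) * phi (j+1)) + C ((n:ℝ)) * phi (j+1)) := by ring
    rw [this, hb]
    push_cast
    simp only [map_neg, map_one, map_add, map_sub, map_mul]
    ring
  have hsum : ∑ j ∈ Finset.range (n+1), t j = 0 := by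
    rw [Finset.sum_range_succ']
    calc (∑ j ∈ Finset.range n, t (j+1)) + t 0
        = (∑ j ∈ Finset.range n, (u (j+1) - v j)) + u 0 := by
          rw [h0]; congr 1; exact Finset.sum_congr rfl fun j _ => hs j
      _ = ((∑ j ∈ Finset.range n, u (j+1)) + u 0) - ∑ j ∈ Finset.range n, v j := by
          rw [Finset.sum_sub_distrib]; ring
      _ = (∑ j ∈ Finset.range (n+1), u j) - ∑ j ∈ Finset.range n, v j := by
          rw [Finset.sum_range_succ']
      _ = ((∑ j ∈ Finset.range n, u j) + u n) - ∑ j ∈ Finset.range n, v j := by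
          rw [Finset.sum_range_succ]
      _ = 0 := by
          have hun : u n = 0 := by simp [hu]
          have : ∑ j ∈ Finset.range n, u j = ∑ j ∈ Finset.range n, v j := by
            refine Finset.sum_congr rfl fun j hj => ?_
            simp only [hu, hv]
            rw [kc_rec n p N j (Finset.mem_range.1 hj)]
          rw [hun, this]; ring
  rw [kraw_eq]
  simp only [Polynomial.sum_comp, mul_comp, C_comp, Finset.mul_sum]
  rw [← sub_eq_zero, ← Finset.sum_add_distrib, ← Finset.sum_sub_distrib]
  exact hsum

lemma kraw_de_shift (n : ℕ) (p N : ℝ) :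
    C p * (C N - 1 - X) * (kraw n p N).comp (X+2) + (X+1) * C (1-p) * (kraw n p N)
      = (C p * (C N - 1 - X) + (X+1) * C (1-p) - C (n:ℝ)) * (kraw n p N).comp (X+1) := by
  have h := congrArg (fun q : Polynomial ℝ => q.comp (X+1)) (kraw_de n p N)
  simp only [add_comp, mul_comp, sub_comp, C_comp, X_comp, one_comp] at h
  rw [comp_assoc, comp_assoc] at h
  simp only [add_comp, sub_comp, X_comp, one_comp, C_comp] at h
  rw [show (X:Polynomial ℝ) + 1 + 1 = X + 2 by ring, show (X:Polynomial ℝ) + 1 - 1 = X by ring,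
    comp_X] at h
  linear_combination h

lemma xkraw3_fe (N : ℕ) (p : ℝ) (d : ℕ) (hd : d ≤ N) :
    (C (N:ℝ) - 1 - X) * (xkraw3 d (N-d) p (N:ℝ)).comp (X+1)
      = -(X+1) * xkraw3 d (N-d) p (N:ℝ) := by
  have hf := kraw_de_shift (N-d) p (N:ℝ)
  have hg := kraw_de_shift d (1-p) (N:ℝ)
  rw [show (1 - (1-p)) = p by ring] at hg
  rw [show (((N - d : ℕ)) : ℝ) = (N:ℝ) - d from by
    rw [Nat.cast_sub hd]] at hf
  unfold xkraw3
  simp only [sub_comp, mul_comp, C_comp, comp_assoc, add_comp, X_comp, one_comp]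
  rw [show (X:Polynomial ℝ) + 1 + 1 = X + 2 by ring]
  simp only [map_sub, map_one] at hf hg ⊢
  linear_combination ((kraw (N-d) p (N:ℝ)).comp (X+1)) * hg + ((kraw d (1-p) (N:ℝ)).comp (X+1)) * hf

lemma phi_eq (j : ℕ) : phi j = C ((-1:ℝ)^j) * ∏ i ∈ Finset.range j, (X - C (i:ℝ)) := by
  unfold phi
  rw [Finset.prod_congr rfl fun i (_ : i ∈ Finset.range j) =>
    show (C (i:ℝ) - X) = (-1) * (X - C (i:ℝ)) from by ring]
  rw [Finset.prod_mul_distrib, Finset.prod_const, Finset.card_range, map_pow, map_neg, map_one]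

lemma phi_natDegree_le (j : ℕ) : (phi j).natDegree ≤ j := by
  rw [phi_eq]
  refine le_trans (natDegree_mul_le) ?_
  rw [natDegree_C, zero_add]
  refine le_trans (natDegree_prod_le _ _) ?_
  refine le_trans (Finset.sum_le_card_nsmul _ _ 1 fun i _ => by
    rw [natDegree_X_sub_C]) ?_
  simp

lemma phi_coeff_self (j : ℕ) : (phi j).coeff j = (-1:ℝ)^j := by
  rw [phi_eq, coeff_C_mul]
  have hm : (∏ i ∈ Finset.range j, (X - C (i:ℝ))).Monic :=
    monic_prod_of_monic _ _ fun i _ => monic_X_sub_C _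
  have hdeg : (∏ i ∈ Finset.range j, (X - C (i:ℝ))).natDegree = j := by
    rw [natDegree_prod _ _ fun i _ => X_sub_C_ne_zero _]
    simp only [natDegree_X_sub_C, Finset.sum_const, Finset.card_range, smul_eq_mul, mul_one]
  have h1 := hm.coeff_natDegree
  rw [hdeg] at h1
  rw [h1, mul_one]

lemma poch_neg_self (n : ℕ) : poch (-(n:ℝ)) n = (-1:ℝ)^n * (Nat.factorial n) := by
  unfold poch
  rw [Finset.prod_congr rfl fun i hi => show (-(n:ℝ) + i) = (-1) * ((n-i:ℕ):ℝ) from by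
    rw [Nat.cast_sub (le_of_lt (Finset.mem_range.1 hi))]; ring]
  rw [Finset.prod_mul_distrib, Finset.prod_const, Finset.card_range, ← Nat.cast_prod]
  congr 2
  rw [← Finset.prod_range_reflect]
  rw [Finset.prod_congr rfl fun i hi => show n - (n - 1 - i) = i + 1 from by
    have := Finset.mem_range.1 hi; omega]
  exact Finset.prod_range_add_one_eq_factorial n

lemma kraw_natDegree_le (n : ℕ) (p N : ℝ) : (kraw n p N).natDegree ≤ n := by
  rw [kraw_eq]
  refine natDegree_sum_le_of_forall_le _ _ fun j hj => ?_
  refine le_trans (natDegree_mul_le) ?_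
  rw [natDegree_C, zero_add]
  exact le_trans (phi_natDegree_le j) (Nat.lt_succ_iff.1 (Finset.mem_range.1 hj))

lemma kraw_coeff_self (n : ℕ) (p N : ℝ) : (kraw n p N).coeff n = 1 := by
  rw [kraw_eq, finset_sum_coeff, Finset.sum_range_succ]
  have h1 : ∀ j ∈ Finset.range n, (C (kc n p N j) * phi j).coeff n = 0 := by
    intro j hj
    rw [coeff_C_mul, coeff_eq_zero_of_natDegree_lt
      (lt_of_le_of_lt (phi_natDegree_le j) (Finset.mem_range.1 hj)), mul_zero]
  rw [Finset.sum_eq_zero h1, zero_add, coeff_C_mul, phi_coeff_self]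
  unfold kc
  rw [Nat.sub_self, pow_zero, mul_one, poch_neg_self]
  unfold poch
  rw [Finset.prod_range_zero]
  have : ((Nat.factorial n : ℝ)) ≠ 0 := Nat.cast_ne_zero.2 (Nat.factorial_ne_zero n)
  field_simp
  rw [← pow_mul, mul_comm, pow_mul]
  norm_num

lemma kraw_monic (n : ℕ) (p N : ℝ) : (kraw n p N).Monic ∧ (kraw n p N).natDegree = n := by
  have hc := kraw_coeff_self n p N
  have hne : kraw n p N ≠ 0 := fun h => by simp [h] at hc
  have hdeg : (kraw n p N).natDegree = n :=
    le_antisymm (kraw_natDegree_le n p N) (le_natDegree_of_ne_zero (by rw [hc]; norm_num))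
  exact ⟨by rwa [Monic, leadingCoeff, hdeg], hdeg⟩

lemma rhs_fe (N : ℕ) :
    (C (N:ℝ) - 1 - X) * (∏ i ∈ Finset.range N, (X - C ((N:ℝ) - 1 - i))).comp (X+1)
      = -(X+1) * ∏ i ∈ Finset.range N, (X - C ((N:ℝ) - 1 - i)) := by
  have hA : ∏ i ∈ Finset.range (N+1), (X - C ((N:ℝ) - 1 - i))
      = (∏ i ∈ Finset.range N, (X - C ((N:ℝ) - 1 - i))) * (X + 1) := by
    rw [Finset.prod_range_succ]
    congr 1
    rw [show (N:ℝ) - 1 - N = -1 by ring, map_neg, map_one, sub_neg_eq_add]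
  have hB : ∏ i ∈ Finset.range (N+1), (X - C ((N:ℝ) - 1 - i))
      = ((∏ i ∈ Finset.range N, (X - C ((N:ℝ) - 1 - i))).comp (X+1)) * (X - C ((N:ℝ) - 1)) := by
    rw [Finset.prod_range_succ', Polynomial.prod_comp]
    congr 1
    · refine Finset.prod_congr rfl fun i _ => ?_
      rw [sub_comp, X_comp, C_comp]
      push_cast
      rw [show (X : Polynomial ℝ) + 1 - C ((N:ℝ) - 1 - i) = X - C ((N:ℝ) - 1 - (i+1)) from by
        simp only [map_sub, map_add, map_one]; ring]
    · norm_num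
  have hc : C ((N:ℝ) - 1) = C (N:ℝ) - 1 := by simp [map_sub]
  linear_combination hB - hA
    - ((∏ i ∈ Finset.range N, (X - C ((N:ℝ) - 1 - i))).comp (X+1)) * hc

/-- The Diophantine identity `K̂_{N−d}^{(3,d)}(x;p,N) = (x−N+1)_N`, i.e.
`p K_d(x;1−p,N) K_{N−d}(x+1;p,N) − (p−1) K_d(x+1;1−p,N) K_{N−d}(x;p,N)
  = (x−N+1)(x−N+2)⋯x`. -/
theorem krawtchouk_exceptional3_diophantine (N : ℕ) (hN : 1 ≤ N) (p : ℝ)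
    (d : ℕ) (hd : d ≤ N) :
    xkraw3 d (N - d) p (N : ℝ) =
      ∏ i ∈ Finset.range N, (Polynomial.X - Polynomial.C ((N : ℝ) - 1 - i)) := by
  set R : Polynomial ℝ := ∏ i ∈ Finset.range N, (X - C ((N:ℝ) - 1 - i)) with hR
  set W : Polynomial ℝ := xkraw3 d (N-d) p (N:ℝ) with hW
  obtain ⟨hgm, hgd⟩ := kraw_monic d (1-p) (N:ℝ)
  obtain ⟨hfm, hfd⟩ := kraw_monic (N-d) p (N:ℝ)
  have hXC : (X + 1 : Polynomial ℝ) = X + C 1 := by rw [map_one]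
  have hf1m : ((kraw (N-d) p (N:ℝ)).comp (X+1)).Monic := by
    rw [hXC]; exact hfm.comp_X_add_C 1
  have hg1m : ((kraw d (1-p) (N:ℝ)).comp (X+1)).Monic := by
    rw [hXC]; exact hgm.comp_X_add_C 1
  have hf1d : ((kraw (N-d) p (N:ℝ)).comp (X+1)).natDegree = N - d := by
    rw [natDegree_comp, hfd, hXC, natDegree_X_add_C, mul_one]
  have hg1d : ((kraw d (1-p) (N:ℝ)).comp (X+1)).natDegree = d := by
    rw [natDegree_comp, hgd, hXC, natDegree_X_add_C, mul_one]
  have hdd : d + (N - d) = N := by omega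
  have h1m : (kraw d (1-p) (N:ℝ) * (kraw (N-d) p (N:ℝ)).comp (X+1)).Monic := hgm.mul hf1m
  have h1d : (kraw d (1-p) (N:ℝ) * (kraw (N-d) p (N:ℝ)).comp (X+1)).natDegree = N := by
    rw [hgm.natDegree_mul hf1m, hgd, hf1d, hdd]
  have h2m : ((kraw d (1-p) (N:ℝ)).comp (X+1) * kraw (N-d) p (N:ℝ)).Monic := hg1m.mul hfm
  have h2d : ((kraw d (1-p) (N:ℝ)).comp (X+1) * kraw (N-d) p (N:ℝ)).natDegree = N := by
    rw [hg1m.natDegree_mul hfm, hg1d, hfd, hdd]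
  have hWc : W.coeff N = 1 := by
    rw [hW]
    unfold xkraw3
    rw [coeff_sub, mul_assoc, mul_assoc, coeff_C_mul, coeff_C_mul]
    have e1 : (kraw d (1-p) (N:ℝ) * (kraw (N-d) p (N:ℝ)).comp (X+1)).coeff N = 1 := by
      have := h1m.coeff_natDegree; rwa [h1d] at this
    have e2 : ((kraw d (1-p) (N:ℝ)).comp (X+1) * kraw (N-d) p (N:ℝ)).coeff N = 1 := by
      have := h2m.coeff_natDegree; rwa [h2d] at this
    rw [e1, e2]
    ring
  have hWd : W.natDegree ≤ N := by
    rw [hW]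
    unfold xkraw3
    refine le_trans (natDegree_sub_le _ _) (max_le ?_ ?_)
    · rw [mul_assoc]
      refine le_trans natDegree_mul_le ?_
      rw [natDegree_C, zero_add, h1d]
    · rw [mul_assoc]
      refine le_trans natDegree_mul_le ?_
      rw [natDegree_C, zero_add, h2d]
  have hRm : R.Monic := monic_prod_of_monic _ _ fun i _ => monic_X_sub_C _
  have hRd : R.natDegree = N := by
    rw [hR, natDegree_prod _ _ fun i _ => X_sub_C_ne_zero _]
    simp only [natDegree_X_sub_C, Finset.sum_const, Finset.card_range, smul_eq_mul, mul_one]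
  set D : Polynomial ℝ := W - R with hD
  have hfe : (C (N:ℝ) - 1 - X) * D.comp (X+1) = -(X+1) * D := by
    rw [hD, sub_comp]
    have h1 := xkraw3_fe N p d hd
    have h2 := rhs_fe N
    rw [← hW] at h1
    rw [← hR] at h2
    linear_combination h1 - h2
  have heval : ∀ r : ℝ, ((N:ℝ) - 1 - r) * D.eval (r+1) = -(r+1) * D.eval r := by
    intro r
    have h := congrArg (eval r) hfe
    simpa [eval_comp] using h
  have hzero : ∀ k : ℕ, k < N → D.eval (k:ℝ) = 0 := by
    intro k
    induction k with
    | zero =>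
      intro _
      have h := heval (-1)
      rw [show (-1:ℝ) + 1 = 0 by ring] at h
      have hN0 : ((N:ℝ) - 1 - (-1)) ≠ 0 := by
        have : (1:ℝ) ≤ N := by exact_mod_cast hN
        intro hc; rw [sub_neg_eq_add] at hc; linarith
      push_cast
      have := mul_eq_zero.1 (h.trans (by ring))
      rcases this with h' | h'
      · exact absurd h' hN0
      · exact h'
    | succ k ih =>
      intro hk
      have h := heval k
      rw [ih (by omega)] at h
      have hne : ((N:ℝ) - 1 - k) ≠ 0 := by
        have : (k:ℝ) + 1 + 1 ≤ N := by exact_mod_cast (by omega : k + 2 ≤ N)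
        intro hc; linarith
      push_cast
      rcases mul_eq_zero.1 (h.trans (by ring)) with h' | h'
      · exact absurd h' hne
      · exact h'
  have hDz : D = 0 := by
    have hDd : D.natDegree ≤ N := le_trans (natDegree_sub_le _ _) (max_le hWd hRd.le)
    have hRc : R.coeff N = 1 := by
      have := hRm.coeff_natDegree; rwa [hRd] at this
    have hDc : D.coeff N = 0 := by rw [hD, coeff_sub, hWc, hRc, sub_self]
    rcases eq_or_ne D 0 with h | h
    · exact h
    refine Polynomial.eq_zero_of_natDegree_lt_card_of_eval_eq_zero' D
      ((Finset.range N).image (Nat.cast : ℕ → ℝ)) ?_ ?_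
    · intro i hi
      obtain ⟨k, hk, rfl⟩ := Finset.mem_image.1 hi
      exact hzero k (Finset.mem_range.1 hk)
    · rw [Finset.card_image_of_injective _ Nat.cast_injective, Finset.card_range]
      rcases lt_or_eq_of_le hDd with hlt | heq
      · exact hlt
      · exact absurd (by rw [← leadingCoeff_eq_zero, leadingCoeff, heq, hDc]) h
  have := sub_eq_zero.1 hDz
  rw [hW] at this
  exact this
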